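/- Let x* be a local minimizer of (NLP) such that MFCQ holds at x* and the rank of the Jacobian matrix J(x*) ∈ ℝ^{(m+q)×n} is n−1, where q is the number of active inequality constraints at x*. Then there exists a Lagrange multiplier (λ,μ) ∈ Λ(x*) such that dᵀ∇²ₓₓL(x*,λ,μ)d ≥ 0 for all d ∈ S(x*) (WSOC holds at x*). -/

import Mathlib

open scoped BigOperators Pointwise
open Matrix

attribute [local instance] Classical.propDecidable

noncomputable section

/-- The gradient vector of `φ` at `x` (the vector of partial derivatives). -/
def gradVec {n : ℕ} (φ : (Fin n → ℝ) → ℝ) (x : Fin n → ℝ) : Fin n → ℝ :=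
  fun k => fderiv ℝ φ x (Pi.single k 1)

/-- The quadratic form `d ↦ dᵀ ∇²φ(x) d` of the Hessian of `φ` at `x`. -/
def hessQ {n : ℕ} (φ : (Fin n → ℝ) → ℝ) (x d : Fin n → ℝ) : ℝ :=
  iteratedFDeriv ℝ 2 φ x ![d, d]

/-- Feasibility for the problem (NLP). -/
def Feas {n m p : ℕ} (h : Fin m → (Fin n → ℝ) → ℝ) (g : Fin p → (Fin n → ℝ) → ℝ)
    (x : Fin n → ℝ) : Prop :=
  (∀ i, h i x = 0) ∧ ∀ j, g j x ≤ 0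

/-- The Lagrangian of (NLP). -/
def Lagr {n m p : ℕ} (f : (Fin n → ℝ) → ℝ) (h : Fin m → (Fin n → ℝ) → ℝ)
    (g : Fin p → (Fin n → ℝ) → ℝ) (lam : Fin m → ℝ) (mu : Fin p → ℝ) (x : Fin n → ℝ) : ℝ :=
  f x + ∑ i, lam i * h i x + ∑ j, mu j * g j x

/-- `(lam, mu)` is a Lagrange multiplier at `xs`, i.e. `(lam, mu) ∈ Λ(xs)`. -/
def IsLagMult {n m p : ℕ} (f : (Fin n → ℝ) → ℝ) (h : Fin m → (Fin n → ℝ) → ℝ)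
    (g : Fin p → (Fin n → ℝ) → ℝ) (xs : Fin n → ℝ) (lam : Fin m → ℝ) (mu : Fin p → ℝ) : Prop :=
  (∀ j, 0 ≤ mu j) ∧ fderiv ℝ (Lagr f h g lam mu) xs = 0 ∧ ∀ j, mu j * g j xs = 0

/-- The Mangasarian-Fromovitz constraint qualification at `xs`. -/
def MFCQ {n m p : ℕ} (h : Fin m → (Fin n → ℝ) → ℝ) (g : Fin p → (Fin n → ℝ) → ℝ)
    (xs : Fin n → ℝ) : Prop :=
  LinearIndependent ℝ (fun i : Fin m => fderiv ℝ (h i) xs) ∧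
  ∃ d : Fin n → ℝ, (∀ i, fderiv ℝ (h i) xs d = 0) ∧
    ∀ j, g j xs = 0 → fderiv ℝ (g j) xs d < 0

/-- Membership in the critical cone `C(xs)`. -/
def critCone {n m p : ℕ} (f : (Fin n → ℝ) → ℝ) (h : Fin m → (Fin n → ℝ) → ℝ)
    (g : Fin p → (Fin n → ℝ) → ℝ) (xs d : Fin n → ℝ) : Prop :=
  fderiv ℝ f xs d = 0 ∧ (∀ i, fderiv ℝ (h i) xs d = 0) ∧
    ∀ j, g j xs = 0 → fderiv ℝ (g j) xs d ≤ 0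

/-- Membership in the critical subspace `S(xs)`. -/
def critSub {n m p : ℕ} (h : Fin m → (Fin n → ℝ) → ℝ) (g : Fin p → (Fin n → ℝ) → ℝ)
    (xs d : Fin n → ℝ) : Prop :=
  (∀ i, fderiv ℝ (h i) xs d = 0) ∧ ∀ j, g j xs = 0 → fderiv ℝ (g j) xs d = 0

/-- The Jacobian matrix `J(x)` of equality and active inequality constraints
(activity taken at the base point `xs`). -/
def Jac {n m p : ℕ} (h : Fin m → (Fin n → ℝ) → ℝ) (g : Fin p → (Fin n → ℝ) → ℝ)
    (xs x : Fin n → ℝ) : Matrix (Fin m ⊕ {j : Fin p // g j xs = 0}) (Fin n) ℝ :=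
  Matrix.of fun i k =>
    Sum.elim (fun i' => fderiv ℝ (h i') x (Pi.single k 1))
      (fun j' => fderiv ℝ (g j'.1) x (Pi.single k 1)) i

/-- A first-order cone: the (direct) sum of a linear subspace and a ray. -/
def IsFirstOrderCone {n : ℕ} (K : Set (Fin n → ℝ)) : Prop :=
  ∃ (W : Submodule ℝ (Fin n → ℝ)) (d0 : Fin n → ℝ),
    K = {x | ∃ w ∈ W, ∃ r : ℝ, 0 ≤ r ∧ x = w + r • d0}

/-- The rank of a family of vectors: the dimension of its linear span. -/
def famRank {ι : Type*} {n : ℕ} (v : ι → (Fin n → ℝ)) : ℕ :=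
  Module.finrank ℝ (Submodule.span ℝ (Set.range v))

/-!
Since rank `J(x*) = n - 1`, the critical subspace `S(x*) = ker J(x*)` is a line `ℝ d₀`, so it
suffices to find one multiplier with `d₀ᵀ ∇²L d₀ ≥ 0`. Consider the linear program
`min ∇f·w + d₀ᵀ∇²f d₀` over the `w` with `∇hᵢ·w + d₀ᵀ∇²hᵢ d₀ = 0` and `∇gⱼ·w + d₀ᵀ∇²gⱼ d₀ ≤ 0`
for active `j`. Its value is nonnegative: otherwise, after perturbing `w` along the MFCQ direction
to make the inequalities strict and replacing `d₀` by `-d₀` if necessary so that `∇f·d₀ ≤ 0`,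
the implicit function theorem yields a feasible arc `x(t)` with `x'(0) = d₀`, `x''(0) = w` along
which `f` strictly decreases. LP duality (Farkas' lemma) turns a nonnegative value into
multipliers `(λ, μ)` with `∇ₓL = 0` and `d₀ᵀ∇²ₓₓL d₀ ≥ 0`.
-/

open Finset Filter Set Topology

theorem sum_dite_eq_sum_subtype {ι M : Type*} [Fintype ι] [AddCommMonoid M] {P : ι → Prop}
    [DecidablePred P] (f : ∀ i, P i → M) :
    ∑ i, (if hi : P i then f i hi else 0) = ∑ i : {i // P i}, f i i.2 := by
  rw [← Fintype.sum_subtype_add_sum_subtype P,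
    Finset.sum_congr rfl fun (i : {i // ¬P i}) _ => dif_neg i.2, Finset.sum_const_zero, add_zero]
  exact Finset.sum_congr rfl fun i _ => dif_pos i.2

section Cones

variable {𝕜 F ι : Type*} [Field 𝕜] [LinearOrder 𝕜] [IsStrictOrderedRing 𝕜]
  [AddCommGroup F] [Module 𝕜 F]

theorem exists_nonneg_sum_erase_eq_of_not_linearIndepOn [DecidableEq ι] {v : ι → F}
    {s : Finset ι} {t : ι → 𝕜} (ht : ∀ i ∈ s, 0 ≤ t i) (hs : ¬LinearIndepOn 𝕜 v s) :
    ∃ i₀ ∈ s, ∃ t' : ι → 𝕜, (∀ i ∈ s, 0 ≤ t' i) ∧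
      ∑ i ∈ s.erase i₀, t' i • v i = ∑ i ∈ s, t i • v i := by
  obtain ⟨f, hf, hpos⟩ : ∃ f : ι → 𝕜, ∑ i ∈ s, f i • v i = 0 ∧ ∃ i ∈ s, 0 < f i := by
    obtain ⟨f, hf, i, hi, hfi⟩ := not_linearIndepOn_finset_iff.mp hs
    rcases hfi.lt_or_gt with hneg | hpos
    · exact ⟨-f, by simp [hf], i, hi, by simpa using hneg⟩
    · exact ⟨f, hf, i, hi, hpos⟩
  -- Subtract the largest multiple of the relation `f` that keeps all coefficients nonnegative.
  obtain ⟨i₀, hi₀, hmin⟩ := (s.filter (0 < f ·)).exists_min_image (fun i => t i / f i)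
    (by simpa [Finset.Nonempty] using hpos)
  rw [Finset.mem_filter] at hi₀
  set τ := t i₀ / f i₀
  refine ⟨i₀, hi₀.1, fun i => t i - τ * f i, fun i hi => ?_, ?_⟩
  · rcases le_or_gt (f i) 0 with hfi | hfi
    · nlinarith [ht i hi, div_nonneg (ht i₀ hi₀.1) hi₀.2.le]
    · have := hmin i (Finset.mem_filter.mpr ⟨hi, hfi⟩)
      rw [le_div_iff₀ hfi] at this
      linarith
  · rw [Finset.sum_erase _ (by simp [τ, hi₀.2.ne'])]
    simp [sub_smul, Finset.sum_sub_distrib, mul_smul, ← Finset.smul_sum, hf]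

theorem exists_linearIndepOn_nonneg_sum_eq (v : ι → F) (s : Finset ι) {t : ι → 𝕜}
    (ht : ∀ i ∈ s, 0 ≤ t i) :
    ∃ s' ⊆ s, LinearIndepOn 𝕜 v s' ∧ ∃ c : ι → 𝕜, (∀ i ∈ s', 0 ≤ c i) ∧
      ∑ i ∈ s', c i • v i = ∑ i ∈ s, t i • v i := by
  classical
  induction s using Finset.strongInduction generalizing t with
  | H s ih =>
    by_cases hs : LinearIndepOn 𝕜 v s
    · exact ⟨s, subset_rfl, hs, t, ht, rfl⟩
    obtain ⟨i₀, hi₀, t', ht', hsum⟩ := exists_nonneg_sum_erase_eq_of_not_linearIndepOn ht hs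
    obtain ⟨s', hs's, hli, c, hc, hcsum⟩ := ih (s.erase i₀) (Finset.erase_ssubset hi₀)
      (fun i hi => ht' i (Finset.mem_of_mem_erase hi))
    exact ⟨s', hs's.trans (Finset.erase_subset _ _), hli, c, hc, hcsum.trans hsum⟩

theorem mem_pointedConeHull_range_iff [Fintype ι] {v : ι → F} {x : F} :
    x ∈ PointedCone.hull 𝕜 (range v) ↔ ∃ t : ι → 𝕜, (∀ i, 0 ≤ t i) ∧ ∑ i, t i • v i = x := by
  refine ⟨fun hx => ?_, fun ⟨t, ht, hx⟩ => hx ▸ Submodule.sum_mem _ fun i _ =>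
    PointedCone.smul_mem _ (ht i) (PointedCone.subset_hull (mem_range_self i))⟩
  obtain ⟨c, rfl⟩ := (Submodule.mem_span_range_iff_exists_fun _).mp hx
  exact ⟨fun i => c i, fun i => (c i).2, rfl⟩

theorem isClosed_pointedConeHull_range [TopologicalSpace F] [IsTopologicalAddGroup F]
    [Module ℝ F] [ContinuousSMul ℝ F] [T2Space F] [Fintype ι] (v : ι → F) :
    IsClosed (PointedCone.hull ℝ (range v) : Set F) := by
  classical
  -- By Carathéodory, the cone is the finite union of the cones over linearly independent
  -- subfamilies, each the image of an orthant under a linear embedding.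
  have key : (PointedCone.hull ℝ (range v) : Set F) = ⋃ s ∈ {s : Finset ι | LinearIndepOn ℝ v s},
      Fintype.linearCombination ℝ (fun i : s => v i) '' {y | 0 ≤ y} := by
    refine Subset.antisymm (fun x hx => ?_) (iUnion₂_subset fun s _ => ?_)
    · obtain ⟨t, ht, rfl⟩ := mem_pointedConeHull_range_iff.mp hx
      obtain ⟨s, -, hli, c, hc, hsum⟩ := exists_linearIndepOn_nonneg_sum_eq v univ fun i _ => ht i
      refine mem_biUnion hli ⟨fun i => c i, fun i => hc i i.2, ?_⟩
      rw [Fintype.linearCombination_apply, Finset.sum_coe_sort s fun i => c i • v i, hsum]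
    · rintro _ ⟨y, hy, rfl⟩
      exact Submodule.sum_mem _ fun i _ =>
        PointedCone.smul_mem _ (hy i) (PointedCone.subset_hull (mem_range_self (i : ι)))
  rw [key]
  refine (toFinite _).isClosed_biUnion fun s hs => ?_
  exact (LinearMap.isClosedEmbedding_of_injective (LinearMap.ker_eq_bot.mpr
    hs.fintypeLinearCombination_injective)).isClosedMap _
    (isClosed_le continuous_const continuous_id)

variable {E : Type*} [NormedAddCommGroup E] [NormedSpace ℝ E]

theorem exists_nonneg_sum_smul_eq_of_forall_nonneg [FiniteDimensional ℝ E] [Fintype ι]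
    (ℓ : ι → StrongDual ℝ E) (c : StrongDual ℝ E) (h : ∀ w, (∀ i, 0 ≤ ℓ i w) → 0 ≤ c w) :
    ∃ t : ι → ℝ, (∀ i, 0 ≤ t i) ∧ ∑ i, t i • ℓ i = c := by
  let C : ProperCone ℝ (StrongDual ℝ E) :=
    ⟨PointedCone.hull ℝ (range ℓ), isClosed_pointedConeHull_range ℓ⟩
  have hc : c ∈ C := by
    rw [← ProperCone.dual_flip_dual (topDualPairing ℝ E) C]
    exact fun w hw => h w fun i => hw (PointedCone.subset_hull (mem_range_self i))
  exact mem_pointedConeHull_range_iff.mp hc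

theorem mul_le_apply_of_forall_le {I J : Type*} {A : I → StrongDual ℝ E} {B : J → StrongDual ℝ E}
    {c : StrongDual ℝ E} {a : I → ℝ} {b : J → ℝ} {γ : ℝ} {w₀ : E} (h₀A : ∀ i, A i w₀ = a i)
    (h₀B : ∀ j, B j w₀ ≤ b j) (hle : ∀ w, (∀ i, A i w = a i) → (∀ j, B j w ≤ b j) → γ ≤ c w)
    {w : E} {s : ℝ} (hs : 0 ≤ s) (hA : ∀ i, A i w = s * a i) (hB : ∀ j, B j w ≤ s * b j) :
    s * γ ≤ c w := by
  rcases hs.eq_or_lt with rfl | hs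
  · -- `w` is a recession direction of the feasible set, so `c` cannot decrease along it.
    by_contra! hneg
    rw [zero_mul] at hneg
    have hr : 0 ≤ (c w₀ - γ + 1) / -c w :=
      div_nonneg (by linarith [hle w₀ h₀A h₀B]) (by linarith)
    have := hle (w₀ + ((c w₀ - γ + 1) / -c w) • w) (fun i => by simp [h₀A, hA]) fun j => by
      simpa using add_le_add (h₀B j) (mul_nonpos_of_nonneg_of_nonpos hr (by simpa using hB j))
    have hcw : (c w₀ - γ + 1) / -c w * c w = -(c w₀ - γ + 1) := by
      field_simp [hneg.ne]
    simp only [map_add, map_smul, smul_eq_mul, hcw] at this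
    linarith
  · have := hle (s⁻¹ • w) (fun i => by simp [hA, hs.ne']) fun j => by
      simpa [hs.ne'] using mul_le_mul_of_nonneg_left (hB j) (inv_nonneg.mpr hs.le)
    simp only [map_smul, smul_eq_mul] at this
    rw [le_inv_mul_iff₀ hs] at this
    linarith

theorem exists_multipliers_of_forall_le [FiniteDimensional ℝ E] {I J : Type*} [Fintype I]
    [Fintype J] (A : I → StrongDual ℝ E) (B : J → StrongDual ℝ E) (c : StrongDual ℝ E)
    (a : I → ℝ) (b : J → ℝ) (γ : ℝ) (hfeas : ∃ w, (∀ i, A i w = a i) ∧ ∀ j, B j w ≤ b j)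
    (hle : ∀ w, (∀ i, A i w = a i) → (∀ j, B j w ≤ b j) → γ ≤ c w) :
    ∃ (lam : I → ℝ) (mu : J → ℝ), (∀ j, 0 ≤ mu j) ∧
      c + ∑ i, lam i • A i + ∑ j, mu j • B j = 0 ∧
      γ + ∑ i, lam i * a i + ∑ j, mu j * b j ≤ 0 := by
  obtain ⟨w₀, h₀A, h₀B⟩ := hfeas
  -- Homogenize on `E × ℝ`, writing each equality constraint as two opposite inequalities.
  let hom (φ : StrongDual ℝ E) (r : ℝ) : StrongDual ℝ (E × ℝ) := φ.coprod (r • .id ℝ ℝ)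
  have hom_apply (φ : StrongDual ℝ E) (r : ℝ) (w : E) (s : ℝ) : hom φ r (w, s) = φ w + r * s :=
    rfl
  obtain ⟨t, ht, hsum⟩ := exists_nonneg_sum_smul_eq_of_forall_nonneg
    (Sum.elim (fun i => hom (A i) (-a i)) <| Sum.elim (fun i => hom (-A i) (a i)) <|
      Sum.elim (fun j => hom (-B j) (b j)) fun _ : Unit => hom 0 1) (hom c (-γ)) <| by
    rintro ⟨w, s⟩ hw
    simp only [Sum.forall, Sum.elim_inl, Sum.elim_inr, hom_apply, _root_.neg_apply,
      _root_.zero_apply, forall_const] at hw ⊢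
    obtain ⟨hA₁, hA₂, hB, hs⟩ := hw
    have := mul_le_apply_of_forall_le h₀A h₀B hle (s := s) (by linarith)
      (fun i => by linarith [hA₁ i, hA₂ i]) (fun j => by linarith [hB j])
    linarith
  refine ⟨fun i => t (.inr (.inl i)) - t (.inl i), fun j => t (.inr (.inr (.inl j))),
    fun j => ht _, ?_, ?_⟩
  · ext w
    have := congrArg (fun φ => φ (w, 0)) hsum
    simp only [Fintype.sum_sum_type, Sum.elim_inl, Sum.elim_inr, Finset.univ_unique,
      PUnit.default_eq_unit, sum_singleton, _root_.add_apply, _root_.sum_apply, _root_.smul_apply,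
      hom_apply, mul_zero, add_zero, smul_eq_mul, _root_.neg_apply, mul_neg, sum_neg_distrib,
      _root_.zero_apply, sub_mul, sum_sub_distrib] at this ⊢
    linarith
  · have := congrArg (fun φ => φ (0, 1)) hsum
    simp only [Fintype.sum_sum_type, Sum.elim_inl, Sum.elim_inr, Finset.univ_unique,
      PUnit.default_eq_unit, sum_singleton, _root_.add_apply, _root_.sum_apply, _root_.smul_apply,
      hom_apply, map_zero, mul_one, zero_add, smul_eq_mul, mul_neg, sum_neg_distrib, sub_mul,
      sum_sub_distrib] at this ⊢
    linarith [ht (.inr (.inr (.inr ())))]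

end Cones

section Curves

variable {E G : Type*} [NormedAddCommGroup E] [NormedSpace ℝ E] [NormedAddCommGroup G]
  [NormedSpace ℝ G]

theorem ContDiffAt.eventually_hasDerivAt_deriv {φ : ℝ → G} {a : ℝ} (hφ : ContDiffAt ℝ 2 φ a) :
    ∀ᶠ t in 𝓝 a, HasDerivAt φ (deriv φ t) t :=
  (hφ.eventually (by simp)).mono fun _ ht => (ht.differentiableAt (by simp)).hasDerivAt

theorem ContDiffAt.contDiffAt_deriv {φ : ℝ → G} {a : ℝ} (hφ : ContDiffAt ℝ 2 φ a) :
    ContDiffAt ℝ 1 (deriv φ) a :=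
  hφ.derivWithin (by norm_num)

theorem eventually_lt_of_hasDerivAt_neg {φ φ' : ℝ → ℝ} {a : ℝ}
    (hφ : ∀ᶠ t in 𝓝 a, HasDerivAt φ (φ' t) t) (hneg : ∀ᶠ t in 𝓝[>] a, φ' t < 0) :
    ∀ᶠ t in 𝓝[>] a, φ t < φ a := by
  obtain ⟨u, hau, hu⟩ := mem_nhdsGT_iff_exists_Ioo_subset.mp
    ((hφ.filter_mono nhdsWithin_le_nhds).and hneg)
  filter_upwards [Ioo_mem_nhdsGT hau] with t ht
  have hsub : Ioo a t ⊆ Ioo a u := Ioo_subset_Ioo_right ht.2.le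
  have hcont : ContinuousOn φ (Icc a t) := fun x hx => by
    rcases hx.1.eq_or_lt with rfl | hax
    · exact hφ.self_of_nhds.continuousAt.continuousWithinAt
    · exact (hu ⟨hax, hx.2.trans_lt ht.2⟩).1.continuousAt.continuousWithinAt
  obtain ⟨c, hc, hslope⟩ := exists_hasDerivAt_eq_slope φ φ' ht.1 hcont fun x hx => (hu (hsub hx)).1
  have := (hu (hsub hc)).2
  rw [hslope, div_neg_iff] at this
  rcases this with ⟨-, h⟩ | ⟨h, -⟩
  · linarith [ht.1]
  · linarith

theorem eventually_lt_of_deriv_nonpos_of_deriv_deriv_neg {φ : ℝ → ℝ} {a : ℝ}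
    (hφ : ContDiffAt ℝ 2 φ a) (h₁ : deriv φ a ≤ 0) (h₂ : deriv (deriv φ) a < 0) :
    ∀ᶠ t in 𝓝[>] a, φ t < φ a := by
  have hφ' := hφ.contDiffAt_deriv
  have hφ'' : ∀ᶠ t in 𝓝 a, HasDerivAt (deriv φ) (deriv (deriv φ) t) t :=
    (hφ'.eventually (by simp)).mono fun _ ht => (ht.differentiableAt one_ne_zero).hasDerivAt
  have hneg : ∀ᶠ t in 𝓝 a, deriv (deriv φ) t < 0 :=
    (hφ'.derivWithin (m := 0) (by norm_num)).continuousAt.eventually_lt continuousAt_const h₂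
  refine eventually_lt_of_hasDerivAt_neg hφ.eventually_hasDerivAt_deriv ?_
  filter_upwards [eventually_lt_of_hasDerivAt_neg hφ'' (hneg.filter_mono nhdsWithin_le_nhds)]
    with t ht using ht.trans_le h₁

theorem deriv_deriv_comp {F : E → G} {x : ℝ → E} {a : ℝ} (hF : ContDiffAt ℝ 2 F (x a))
    (hx : ContDiffAt ℝ 2 x a) :
    deriv (deriv (F ∘ x)) a = fderiv ℝ (fderiv ℝ F) (x a) (deriv x a) (deriv x a) +
      fderiv ℝ F (x a) (deriv (deriv x) a) := by
  have hev : deriv (F ∘ x) =ᶠ[𝓝 a] fun t => fderiv ℝ F (x t) (deriv x t) := by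
    filter_upwards [hx.eventually (by simp), hx.continuousAt.eventually (hF.eventually (by simp))]
      with t hxt hFt
    exact fderiv_comp_deriv _ (hFt.differentiableAt (by simp)) (hxt.differentiableAt (by simp))
  have hF' : HasDerivAt (fun t => fderiv ℝ F (x t)) (fderiv ℝ (fderiv ℝ F) (x a) (deriv x a)) a :=
    ((hF.fderiv_right (m := 1) le_rfl).differentiableAt one_ne_zero).hasFDerivAt.comp_hasDerivAt a
      (hx.differentiableAt (by simp)).hasDerivAt
  have hx' : HasDerivAt (deriv x) (deriv (deriv x) a) a :=
    (hx.contDiffAt_deriv.differentiableAt one_ne_zero).hasDerivAt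
  rw [hev.deriv_eq, (hF'.clm_apply hx').deriv]

variable {ι : Type*} [Fintype ι]

theorem exists_rightInverse_of_linearIndependent {ℓ : ι → StrongDual ℝ E}
    (hℓ : LinearIndependent ℝ ℓ) : ∃ R : (ι → ℝ) →L[ℝ] E, ∀ v i, ℓ i (R v) = v i := by
  classical
  let T : E →ₗ[ℝ] ι → ℝ := LinearMap.pi fun i => (ℓ i : E →ₗ[ℝ] ℝ)
  have hT : Function.Surjective T := by
    -- A functional on `ι → ℝ` vanishing on the range of `T` is a linear relation among the `ℓ i`.
    refine LinearMap.dualMap_injective_iff.mp <| (injective_iff_map_eq_zero _).mpr fun y hy => ?_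
    have hcomb : ∑ i, y (Pi.single i 1) • ℓ i = 0 := by
      ext w
      have := LinearMap.congr_fun hy w
      simp only [LinearMap.dualMap_apply, LinearMap.zero_apply] at this
      rw [_root_.zero_apply, ← this, LinearMap.pi_apply_eq_sum_univ y]
      simp only [T, FunLike.coe_sum, Finset.sum_apply, FunLike.coe_smul, Pi.smul_apply,
        smul_eq_mul, LinearMap.pi_apply, ContinuousLinearMap.coe_coe, mul_comm]
      congr! with i _ j
      simp [Pi.single_apply, eq_comm]
    have := Fintype.linearIndependent_iff.mp hℓ _ hcomb
    exact LinearMap.pi_ext' fun i => LinearMap.ext_ring (by simpa using this i)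
  obtain ⟨g, hg⟩ := T.exists_rightInverse_of_surjective (LinearMap.range_eq_top.mpr hT)
  exact ⟨LinearMap.toContinuousLinearMap g, fun v i => congrFun (LinearMap.congr_fun hg v) i⟩

theorem exists_correction_eventually_eq_zero [CompleteSpace E] {h : ι → E → ℝ} {x₀ : E}
    (hh : ∀ i, ContDiffAt ℝ 2 (h i) x₀) (h₀ : ∀ i, h i x₀ = 0)
    {R : (ι → ℝ) →L[ℝ] E} (hR : ∀ v i, fderiv ℝ (h i) x₀ (R v) = v i)
    {y : ℝ → E} (hy : ContDiffAt ℝ 2 y 0) (hy₀ : y 0 = x₀) :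
    ∃ ψ : ℝ → ι → ℝ, ContDiffAt ℝ 2 ψ 0 ∧ ψ 0 = 0 ∧
      ∀ᶠ t in 𝓝 0, ∀ i, h i (y t + R (ψ t)) = 0 := by
  set Φ : ℝ × (ι → ℝ) → ι → ℝ := fun p i => h i (y p.1 + R p.2)
  have hpt : y (0, (0 : ι → ℝ)).1 + R (0, (0 : ι → ℝ)).2 = x₀ := by simp [hy₀]
  have hΦ : ContDiffAt ℝ 2 Φ (0, 0) := contDiffAt_pi.mpr fun i =>
    (hpt ▸ hh i).comp (0, 0) ((hy.comp ((0 : ℝ), (0 : ι → ℝ)) contDiffAt_fst).add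
      (R.contDiff.contDiffAt.comp ((0 : ℝ), (0 : ι → ℝ)) contDiffAt_snd))
  have hinv : (fderiv ℝ Φ (0, 0) ∘L .inr ℝ ℝ (ι → ℝ)).IsInvertible := by
    have h₁ : HasFDerivAt (fun u => Φ (0, u)) (fderiv ℝ Φ (0, 0) ∘L .inr ℝ ℝ (ι → ℝ)) 0 :=
      (hΦ.differentiableAt two_ne_zero).hasFDerivAt.comp (0 : ι → ℝ)
        (ContinuousLinearMap.inr ℝ ℝ (ι → ℝ)).hasFDerivAt
    have h₂ : HasFDerivAt (fun u => Φ (0, u))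
        (ContinuousLinearMap.pi (fun i => fderiv ℝ (h i) x₀) ∘L R) 0 := by
      have hH : HasFDerivAt (fun z i => h i z) (ContinuousLinearMap.pi fun i => fderiv ℝ (h i) x₀)
          (y 0 + R 0) := hasFDerivAt_pi.mpr fun i => by
        simpa [hy₀] using ((hh i).differentiableAt two_ne_zero).hasFDerivAt
      exact hH.comp (0 : ι → ℝ) (R.hasFDerivAt.const_add (y 0))
    rw [h₁.unique h₂]
    exact ⟨.refl ℝ _, by ext v i; simp [hR]⟩
  refine ⟨hΦ.implicitFunction two_ne_zero hinv, hΦ.contDiffAt_implicitFunction _ _,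
    hΦ.implicitFunction_apply_self _ _, ?_⟩
  filter_upwards [hΦ.eventually_apply_implicitFunction two_ne_zero hinv] with t ht i
  simpa [Φ, hy₀, h₀] using congrFun ht i

theorem exists_curve_eventually_eq_zero [CompleteSpace E] {h : ι → E → ℝ} {x₀ d W : E}
    (hh : ∀ i, ContDiffAt ℝ 2 (h i) x₀) (h₀ : ∀ i, h i x₀ = 0)
    (hli : LinearIndependent ℝ fun i => fderiv ℝ (h i) x₀) (hd : ∀ i, fderiv ℝ (h i) x₀ d = 0)
    (hW : ∀ i, fderiv ℝ (fderiv ℝ (h i)) x₀ d d + fderiv ℝ (h i) x₀ W = 0) :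
    ∃ x : ℝ → E, ContDiffAt ℝ 2 x 0 ∧ x 0 = x₀ ∧ deriv x 0 = d ∧ deriv (deriv x) 0 = W ∧
      ∀ᶠ t in 𝓝 0, ∀ i, h i (x t) = 0 := by
  obtain ⟨R, hR⟩ := exists_rightInverse_of_linearIndependent hli
  set y : ℝ → E := fun t => x₀ + t • d + (t ^ 2 / 2) • W
  have hy : ContDiff ℝ 2 y := by fun_prop
  obtain ⟨ψ, hψ, hψ₀, hψh⟩ :=
    exists_correction_eventually_eq_zero hh h₀ hR hy.contDiffAt (by simp [y])
  set x : ℝ → E := fun t => y t + R (ψ t)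
  have hx : ContDiffAt ℝ 2 x 0 := hy.contDiffAt.add (R.contDiff.contDiffAt.comp 0 hψ)
  have hx₀ : x 0 = x₀ := by simp [x, y, hψ₀]
  have hx' : ∀ᶠ t in 𝓝 0, HasDerivAt x (d + t • W + R (deriv ψ t)) t := by
    filter_upwards [hψ.eventually_hasDerivAt_deriv] with t ht
    have hy' : HasDerivAt y (d + t • W) t := by
      convert (((hasDerivAt_id' t).smul_const d).const_add x₀).fun_add
        (((hasDerivAt_pow 2 t).div_const 2).smul_const W) using 1
      simp
    exact hy'.add (R.hasFDerivAt.comp_hasDerivAt t ht)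
  have hx'' : HasDerivAt (fun t => d + t • W + R (deriv ψ t)) (W + R (deriv (deriv ψ) 0)) 0 := by
    simpa using ((hasDerivAt_id' (0 : ℝ)).smul_const W).const_add d |>.fun_add <|
      R.hasFDerivAt.comp_hasDerivAt 0 (hψ.contDiffAt_deriv.differentiableAt one_ne_zero).hasDerivAt
  have hdx : deriv x 0 = d + R (deriv ψ 0) := by simpa using hx'.self_of_nhds.deriv
  have hddx : deriv (deriv x) 0 = W + R (deriv (deriv ψ) 0) := by
    rw [EventuallyEq.deriv_eq (hx'.mono fun t ht => ht.deriv), hx''.deriv]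
  -- Differentiating `h ∘ x = 0` once and twice forces `ψ'(0) = 0` and `ψ''(0) = 0`.
  have hxh : ∀ i, (h i ∘ x) =ᶠ[𝓝 0] fun _ => 0 := fun i => hψh.mono fun t ht => ht i
  have hψ' : deriv ψ 0 = 0 := funext fun i => by
    have := (hxh i).deriv_eq
    rw [fderiv_comp_deriv _ ((hx₀ ▸ hh i).differentiableAt two_ne_zero)
      (hx.differentiableAt two_ne_zero)] at this
    simpa [hx₀, hdx, hd, hR] using this
  have hψ'' : deriv (deriv ψ) 0 = 0 := funext fun i => by
    have := (hxh i).deriv.deriv_eq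
    rw [deriv_deriv_comp (hx₀ ▸ hh i) hx] at this
    simpa [hx₀, hdx, hddx, hψ', hR, ← add_assoc, hW] using this
  exact ⟨x, hx, hx₀, by simp [hdx, hψ'], by simp [hddx, hψ''], hψh⟩

end Curves

section NLP

variable {n m p : ℕ}

theorem hessQ_eq_fderiv_fderiv (φ : (Fin n → ℝ) → ℝ) (x d : Fin n → ℝ) :
    hessQ φ x d = fderiv ℝ (fderiv ℝ φ) x d d := by
  simp [hessQ, iteratedFDeriv_two_apply]

theorem hessQ_smul (φ : (Fin n → ℝ) → ℝ) (x d : Fin n → ℝ) (r : ℝ) :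
    hessQ φ x (r • d) = r ^ 2 * hessQ φ x d := by
  simp only [hessQ_eq_fderiv_fderiv, map_smul, _root_.smul_apply, smul_eq_mul]
  ring

theorem hessQ_neg (φ : (Fin n → ℝ) → ℝ) (x d : Fin n → ℝ) : hessQ φ x (-d) = hessQ φ x d := by
  simpa using hessQ_smul φ x d (-1)

theorem fderiv_Lagr {f : (Fin n → ℝ) → ℝ} {h : Fin m → (Fin n → ℝ) → ℝ}
    {g : Fin p → (Fin n → ℝ) → ℝ} {x : Fin n → ℝ} (hf : DifferentiableAt ℝ f x)
    (hh : ∀ i, DifferentiableAt ℝ (h i) x) (hg : ∀ j, DifferentiableAt ℝ (g j) x)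
    (lam : Fin m → ℝ) (mu : Fin p → ℝ) :
    fderiv ℝ (Lagr f h g lam mu) x =
      fderiv ℝ f x + ∑ i, lam i • fderiv ℝ (h i) x + ∑ j, mu j • fderiv ℝ (g j) x :=
  ((hf.hasFDerivAt.add (HasFDerivAt.fun_sum fun i _ => (hh i).hasFDerivAt.const_mul (lam i))).add
    (HasFDerivAt.fun_sum fun j _ => (hg j).hasFDerivAt.const_mul (mu j))).fderiv

theorem hessQ_Lagr {f : (Fin n → ℝ) → ℝ} {h : Fin m → (Fin n → ℝ) → ℝ}
    {g : Fin p → (Fin n → ℝ) → ℝ} {x : Fin n → ℝ} (hf : ContDiffAt ℝ 2 f x)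
    (hh : ∀ i, ContDiffAt ℝ 2 (h i) x) (hg : ∀ j, ContDiffAt ℝ 2 (g j) x)
    (lam : Fin m → ℝ) (mu : Fin p → ℝ) (d : Fin n → ℝ) :
    hessQ (Lagr f h g lam mu) x d =
      hessQ f x d + ∑ i, lam i * hessQ (h i) x d + ∑ j, mu j * hessQ (g j) x d := by
  have hmul {F : (Fin n → ℝ) → ℝ} (hF : ContDiffAt ℝ 2 F x) (c : ℝ) :
      iteratedFDeriv ℝ 2 (fun y => c * F y) x = c • iteratedFDeriv ℝ 2 F x :=
    iteratedFDeriv_const_smul_apply' (a := c) hF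
  have hsum {k : ℕ} {F : Fin k → (Fin n → ℝ) → ℝ} (hF : ∀ i, ContDiffAt ℝ 2 (F i) x)
      (c : Fin k → ℝ) : ContDiffAt ℝ 2 (fun y => ∑ i, c i * F i y) x :=
    ContDiffAt.sum fun i _ => contDiffAt_const.mul (hF i)
  unfold hessQ Lagr
  rw [fun_iteratedFDeriv_add_apply (hf.add (hsum hh lam)) (hsum hg mu),
    fun_iteratedFDeriv_add_apply hf (hsum hh lam),
    iteratedFDeriv_fun_sum_apply fun i _ => contDiffAt_const.mul (hh i),
    iteratedFDeriv_fun_sum_apply fun j _ => contDiffAt_const.mul (hg j)]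
  simp [hmul (hh _), hmul (hg _)]

theorem Jac_self_eq_toMatrix' (h : Fin m → (Fin n → ℝ) → ℝ) (g : Fin p → (Fin n → ℝ) → ℝ)
    (xs : Fin n → ℝ) :
    Jac h g xs xs = LinearMap.toMatrix' (LinearMap.pi (Sum.elim
      (fun i => (fderiv ℝ (h i) xs : (Fin n → ℝ) →ₗ[ℝ] ℝ))
      (fun j : {j // g j xs = 0} => (fderiv ℝ (g j) xs : (Fin n → ℝ) →ₗ[ℝ] ℝ)))) := by
  ext (i | j) k <;> simp [Jac, LinearMap.toMatrix'_apply]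

theorem exists_critSub_eq_smul_of_rank {h : Fin m → (Fin n → ℝ) → ℝ}
    {g : Fin p → (Fin n → ℝ) → ℝ} {xs : Fin n → ℝ} (hrank : (Jac h g xs xs).rank + 1 = n) :
    ∃ d₀, critSub h g xs d₀ ∧ ∀ d, critSub h g xs d → ∃ r : ℝ, d = r • d₀ := by
  rw [Jac_self_eq_toMatrix', Matrix.rank, ← Matrix.toLin'_apply', Matrix.toLin'_toMatrix'] at hrank
  set T : (Fin n → ℝ) →ₗ[ℝ] (Fin m ⊕ {j // g j xs = 0} → ℝ) := LinearMap.pi (Sum.elim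
      (fun i => (fderiv ℝ (h i) xs : (Fin n → ℝ) →ₗ[ℝ] ℝ))
      (fun j : {j // g j xs = 0} => (fderiv ℝ (g j) xs : (Fin n → ℝ) →ₗ[ℝ] ℝ)))
  have hker (d : Fin n → ℝ) : d ∈ LinearMap.ker T ↔ critSub h g xs d := by
    simp [T, critSub, funext_iff, Sum.forall]
  have hdim : Module.finrank ℝ (LinearMap.ker T) ≤ 1 := by
    have := LinearMap.finrank_range_add_finrank_ker T
    simp only [Module.finrank_fintype_fun_eq_card, Fintype.card_fin] at this
    omega
  obtain ⟨d₀, hd₀⟩ := finrank_le_one_iff.mp hdim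
  refine ⟨d₀, (hker d₀).mp d₀.2, fun d hd => ?_⟩
  obtain ⟨r, hr⟩ := hd₀ ⟨d, (hker d).mpr hd⟩
  exact ⟨r, congrArg Subtype.val hr.symm⟩

theorem MFCQ.exists_fderiv_eq_and_fderiv_le {h : Fin m → (Fin n → ℝ) → ℝ}
    {g : Fin p → (Fin n → ℝ) → ℝ} {xs : Fin n → ℝ} (hmfcq : MFCQ h g xs) (a : Fin m → ℝ)
    (b : Fin p → ℝ) :
    ∃ w, (∀ i, fderiv ℝ (h i) xs w = a i) ∧ ∀ j, g j xs = 0 → fderiv ℝ (g j) xs w ≤ b j := by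
  obtain ⟨hli, v, hvh, hvg⟩ := hmfcq
  obtain ⟨R, hR⟩ := exists_rightInverse_of_linearIndependent hli
  have hev (j : Fin p) : ∀ᶠ τ : ℝ in atTop, g j xs = 0 → fderiv ℝ (g j) xs (R a + τ • v) ≤ b j := by
    by_cases hj : g j xs = 0
    · have := tendsto_atBot_add_const_left _ (fderiv ℝ (g j) xs (R a))
        (tendsto_id.atTop_mul_const_of_neg (hvg j hj))
      exact (this.eventually (eventually_le_atBot (b j))).mono fun τ hτ _ => by simpa using hτ
    · exact .of_forall fun _ hj' => absurd hj' hj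
  obtain ⟨τ, hτ⟩ := (eventually_all.mpr hev).exists
  exact ⟨R a + τ • v, fun i => by simp [hR, hvh], hτ⟩

theorem IsLocalMinOn.neg_hessQ_le_fderiv_of_lt {f : (Fin n → ℝ) → ℝ}
    {h : Fin m → (Fin n → ℝ) → ℝ} {g : Fin p → (Fin n → ℝ) → ℝ} {xs : Fin n → ℝ}
    (hmin : IsLocalMinOn f {x | Feas h g x} xs) (hf : ContDiffAt ℝ 2 f xs)
    (hh : ∀ i, ContDiffAt ℝ 2 (h i) xs) (hg : ∀ j, ContDiffAt ℝ 2 (g j) xs) (hfeas : Feas h g xs)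
    (hli : LinearIndependent ℝ fun i => fderiv ℝ (h i) xs) {d W : Fin n → ℝ}
    (hd : critSub h g xs d) (hfd : fderiv ℝ f xs d ≤ 0)
    (hWh : ∀ i, fderiv ℝ (h i) xs W = -hessQ (h i) xs d)
    (hWg : ∀ j, g j xs = 0 → fderiv ℝ (g j) xs W < -hessQ (g j) xs d) :
    -hessQ f xs d ≤ fderiv ℝ f xs W := by
  by_contra! hlt
  obtain ⟨x, hx, hx₀, hx', hx'', hxh⟩ := exists_curve_eventually_eq_zero hh hfeas.1 hli hd.1
    fun i => by rw [← hessQ_eq_fderiv_fderiv, hWh i, add_neg_cancel]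
  have descent {F : (Fin n → ℝ) → ℝ} (hF : ContDiffAt ℝ 2 F xs) (h₁ : fderiv ℝ F xs d ≤ 0)
      (h₂ : fderiv ℝ F xs W < -hessQ F xs d) : ∀ᶠ t in 𝓝[>] 0, F (x t) < F xs := by
    rw [← hx₀] at hF ⊢
    refine eventually_lt_of_deriv_nonpos_of_deriv_deriv_neg (φ := F ∘ x) (hF.comp 0 hx) ?_ ?_
    · rwa [fderiv_comp_deriv _ (hF.differentiableAt two_ne_zero) (hx.differentiableAt two_ne_zero),
        hx₀, hx']
    · rw [deriv_deriv_comp hF hx, hx₀, hx', hx'', ← hessQ_eq_fderiv_fderiv]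
      linarith
  have hgx (j : Fin p) : ∀ᶠ t in 𝓝[>] 0, g j (x t) ≤ 0 := by
    by_cases hj : g j xs = 0
    · exact (descent (hg j) (hd.2 j hj).le (hWg j hj)).mono fun t ht => by linarith
    · have hc : ContinuousAt (fun t => g j (x t)) 0 :=
        (hx₀ ▸ (hg j).continuousAt).comp hx.continuousAt
      have hlt : g j (x 0) < 0 := hx₀ ▸ (hfeas.2 j).lt_of_ne hj
      exact ((hc.eventually_lt continuousAt_const hlt).filter_mono nhdsWithin_le_nhds).mono
        fun _ => le_of_lt
  have htend : Tendsto x (𝓝[>] 0) (𝓝[{x | Feas h g x}] xs) :=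
    tendsto_nhdsWithin_iff.mpr ⟨hx₀ ▸ hx.continuousAt.tendsto.mono_left nhdsWithin_le_nhds,
      (hxh.filter_mono nhdsWithin_le_nhds).and (eventually_all.mpr hgx)⟩
  obtain ⟨t, ht₁, ht₂⟩ := ((descent hf hfd hlt).and (htend.eventually hmin)).exists
  exact ht₁.not_ge ht₂

theorem IsLocalMinOn.neg_hessQ_le_fderiv {f : (Fin n → ℝ) → ℝ}
    {h : Fin m → (Fin n → ℝ) → ℝ} {g : Fin p → (Fin n → ℝ) → ℝ} {xs : Fin n → ℝ}
    (hmin : IsLocalMinOn f {x | Feas h g x} xs) (hf : ContDiffAt ℝ 2 f xs)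
    (hh : ∀ i, ContDiffAt ℝ 2 (h i) xs) (hg : ∀ j, ContDiffAt ℝ 2 (g j) xs) (hfeas : Feas h g xs)
    (hmfcq : MFCQ h g xs)
    {d w : Fin n → ℝ} (hd : critSub h g xs d)
    (hwh : ∀ i, fderiv ℝ (h i) xs w = -hessQ (h i) xs d)
    (hwg : ∀ j, g j xs = 0 → fderiv ℝ (g j) xs w ≤ -hessQ (g j) xs d) :
    -hessQ f xs d ≤ fderiv ℝ f xs w := by
  obtain ⟨hli, v, hvh, hvg⟩ := hmfcq
  by_contra! hlt
  -- A small step `ε • v` along the MFCQ direction makes the active inequalities strict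
  -- while keeping `∇f·w < -dᵀ∇²f d`.
  obtain ⟨ε, hε, hεv⟩ := exists_pos_mul_lt (sub_pos.mpr hlt) (fderiv ℝ f xs v)
  -- `d` and `-d` have the same Hessian terms; pick the one along which `f` does not increase.
  obtain ⟨e, he, hfe, hQe⟩ : ∃ e, critSub h g xs e ∧ fderiv ℝ f xs e ≤ 0 ∧
      ∀ F, hessQ F xs e = hessQ F xs d := by
    rcases le_total (fderiv ℝ f xs d) 0 with hle | hle
    · exact ⟨d, hd, hle, fun _ => rfl⟩
    · exact ⟨-d, ⟨fun i => by simp [hd.1 i], fun j hj => by simp [hd.2 j hj]⟩, by simpa using hle,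
        fun F => hessQ_neg F xs d⟩
  have := hmin.neg_hessQ_le_fderiv_of_lt hf hh hg hfeas hli he hfe (W := w + ε • v)
    (fun i => by simp [hwh, hvh, hQe])
    fun j hj => by
      simpa [hQe] using add_lt_add_of_le_of_lt (hwg j hj) (mul_neg_of_pos_of_neg hε (hvg j hj))
  simp only [hQe, map_add, map_smul, smul_eq_mul] at this
  linarith

theorem exists_isLagMult_of_active {f : (Fin n → ℝ) → ℝ} {h : Fin m → (Fin n → ℝ) → ℝ}
    {g : Fin p → (Fin n → ℝ) → ℝ} {xs : Fin n → ℝ} (hf : ContDiffAt ℝ 2 f xs)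
    (hh : ∀ i, ContDiffAt ℝ 2 (h i) xs) (hg : ∀ j, ContDiffAt ℝ 2 (g j) xs) (lam : Fin m → ℝ)
    (mu : {j // g j xs = 0} → ℝ) (hmu : ∀ j, 0 ≤ mu j)
    (hstat : fderiv ℝ f xs + ∑ i, lam i • fderiv ℝ (h i) xs + ∑ j, mu j • fderiv ℝ (g j) xs = 0) :
    ∃ mu' : Fin p → ℝ, IsLagMult f h g xs lam mu' ∧ ∀ d, hessQ (Lagr f h g lam mu') xs d =
      hessQ f xs d + ∑ i, lam i * hessQ (h i) xs d + ∑ j, mu j * hessQ (g j) xs d := by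
  set mu' : Fin p → ℝ := fun j => if hj : g j xs = 0 then mu ⟨j, hj⟩ else 0
  have hsum {M : Type} [AddCommMonoid M] [Module ℝ M] (F : Fin p → M) :
      ∑ j, mu' j • F j = ∑ j : {j // g j xs = 0}, mu j • F j := by
    simp only [mu', dite_smul, zero_smul, sum_dite_eq_sum_subtype]
  refine ⟨mu', ⟨fun j => ?_, ?_, fun j => ?_⟩, fun d => ?_⟩
  · by_cases hj : g j xs = 0 <;> simp [mu', hj, hmu]
  · rw [fderiv_Lagr (hf.differentiableAt two_ne_zero) (fun i => (hh i).differentiableAt two_ne_zero)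
      (fun j => (hg j).differentiableAt two_ne_zero), hsum, hstat]
  · by_cases hj : g j xs = 0 <;> simp [mu', hj]
  · have := hsum fun j => hessQ (g j) xs d
    simp only [smul_eq_mul] at this
    rw [hessQ_Lagr hf hh hg, this]

theorem IsLocalMinOn.exists_isLagMult_hessQ_nonneg {f : (Fin n → ℝ) → ℝ}
    {h : Fin m → (Fin n → ℝ) → ℝ} {g : Fin p → (Fin n → ℝ) → ℝ} {xs : Fin n → ℝ}
    (hmin : IsLocalMinOn f {x | Feas h g x} xs) (hf : ContDiffAt ℝ 2 f xs)
    (hh : ∀ i, ContDiffAt ℝ 2 (h i) xs) (hg : ∀ j, ContDiffAt ℝ 2 (g j) xs)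
    (hfeas : Feas h g xs) (hmfcq : MFCQ h g xs) {d : Fin n → ℝ} (hd : critSub h g xs d) :
    ∃ (lam : Fin m → ℝ) (mu : Fin p → ℝ), IsLagMult f h g xs lam mu ∧
      0 ≤ hessQ (Lagr f h g lam mu) xs d := by
  obtain ⟨w₀, hw₀h, hw₀g⟩ := hmfcq.exists_fderiv_eq_and_fderiv_le
    (fun i => -hessQ (h i) xs d) (fun j => -hessQ (g j) xs d)
  obtain ⟨lam, mu, hmu, hstat, hval⟩ := exists_multipliers_of_forall_le
    (fun i => fderiv ℝ (h i) xs) (fun j : {j // g j xs = 0} => fderiv ℝ (g j) xs)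
    (fderiv ℝ f xs) (fun i => -hessQ (h i) xs d) (fun j => -hessQ (g j) xs d) (-hessQ f xs d)
    ⟨w₀, hw₀h, fun j => hw₀g j j.2⟩ fun w hwh hwg =>
      hmin.neg_hessQ_le_fderiv hf hh hg hfeas hmfcq hd hwh fun j hj => hwg ⟨j, hj⟩
  obtain ⟨mu', hmult, hQ⟩ := exists_isLagMult_of_active hf hh hg lam mu hmu hstat
  refine ⟨lam, mu', hmult, ?_⟩
  simp only [mul_neg, Finset.sum_neg_distrib] at hval
  linarith [hQ d]

end NLP

theorem stmt9 {n m p : ℕ} (f : (Fin n → ℝ) → ℝ) (h : Fin m → (Fin n → ℝ) → ℝ)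
    (g : Fin p → (Fin n → ℝ) → ℝ)
    (hf : ContDiff ℝ 2 f) (hh : ∀ i, ContDiff ℝ 2 (h i)) (hg : ∀ j, ContDiff ℝ 2 (g j))
    (xs : Fin n → ℝ) (hfeas : Feas h g xs)
    (hmin : IsLocalMinOn f {x | Feas h g x} xs)
    (hmfcq : MFCQ h g xs)
    (hrank : (Jac h g xs xs).rank + 1 = n) :
    ∃ (lam : Fin m → ℝ) (mu : Fin p → ℝ), IsLagMult f h g xs lam mu ∧
      ∀ d, critSub h g xs d → 0 ≤ hessQ (Lagr f h g lam mu) xs d := by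
  obtain ⟨d₀, hd₀, hgen⟩ := exists_critSub_eq_smul_of_rank hrank
  obtain ⟨lam, mu, hmult, hQ⟩ := hmin.exists_isLagMult_hessQ_nonneg hf.contDiffAt
    (fun i => (hh i).contDiffAt) (fun j => (hg j).contDiffAt) hfeas hmfcq hd₀
  refine ⟨lam, mu, hmult, fun d hd => ?_⟩
  obtain ⟨r, rfl⟩ := hgen d hd
  rw [hessQ_smul]
  exact mul_nonneg (sq_nonneg r) hQ
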